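/- (Lemma 'equiv', type D_{n+1}^{(2)}.) Suppose in addition that λ is B_n-dominant, i.e., λ_1 ≥ λ_2 ≥ ⋯ ≥ λ_n ≥ 0. Then the following are equivalent: (1) P_i^{(a)}(ν) ≥ 0 for every 1 ≤ a ≤ n and every integer i ≥ 1; (2) P_i^{(a)}(ν) ≥ 0 for every 1 ≤ a ≤ n and every integer i ≥ 1 such that m_i(ν^{(a)}) > 0. -/
import Mathlib


/-!
STATEMENT 18: Lemma 'equiv', type D_{n+1}^{(2)}.
-/

namespace OSS

/-- `Q i τ = Σ_{t ∈ τ} min(t, i)`. -/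
def Q (i : ℚ) (τ : Multiset ℚ) : ℚ := (τ.map (fun t => min t i)).sum

/-- Vacancy numbers of type `D_{n+1}^{(2)}` (with `ν 0 = ∅` assumed). -/
def P (n L : ℕ) (ν : ℕ → Multiset ℚ) (a : ℕ) (i : ℚ) : ℚ :=
  if a = n then 2 * Q i (ν (n - 1)) - 2 * Q i (ν n)
  else
    Q i (ν (a - 1)) - 2 * Q i (ν a) + Q i (ν (a + 1))
      + (L : ℚ) * min i 1 * (if a = 1 then 1 else 0)


lemma Q_zero (τ : Multiset ℚ) (h : ∀ t ∈ τ, 0 ≤ t) : Q 0 τ = 0 := by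
  refine Multiset.sum_eq_zero ?_
  intro x hx
  obtain ⟨t, ht, rfl⟩ := Multiset.mem_map.1 hx
  exact min_eq_right (h t ht)

lemma Q_large (τ : Multiset ℚ) (i : ℚ) (h : ∀ t ∈ τ, t ≤ i) : Q i τ = τ.sum := by
  unfold Q
  rw [Multiset.map_congr rfl (fun t ht => min_eq_left (h t ht)), Multiset.map_id']

lemma min_sd_le {k i : ℤ} (hi : 1 ≤ i) :
    min (k:ℚ) ((i:ℚ)-1) + min (k:ℚ) ((i:ℚ)+1) ≤ 2 * min (k:ℚ) (i:ℚ) := by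
  have hc : ∀ p q : ℤ, p ≤ q → (p:ℚ) ≤ (q:ℚ) := fun p q h => by exact_mod_cast h
  rcases lt_trichotomy k i with h | rfl | h
  · have h1 : (k:ℚ) ≤ (i:ℚ) - 1 := by have := hc k (i-1) (by omega); push_cast at this; linarith
    rw [min_eq_left h1, min_eq_left (by linarith), min_eq_left (by linarith)]
    linarith
  · rw [min_eq_right (by linarith), min_eq_left (by linarith), min_self]
    linarith
  · have h1 : (i:ℚ) + 1 ≤ (k:ℚ) := by have := hc (i+1) k (by omega); push_cast at this; linarith
    rw [min_eq_right (by linarith), min_eq_right (by linarith), min_eq_right (by linarith)]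
    linarith

lemma min_sd_eq {k i : ℤ} (hi : 1 ≤ i) (hne : k ≠ i) :
    min (k:ℚ) ((i:ℚ)-1) + min (k:ℚ) ((i:ℚ)+1) = 2 * min (k:ℚ) (i:ℚ) := by
  have hc : ∀ p q : ℤ, p ≤ q → (p:ℚ) ≤ (q:ℚ) := fun p q h => by exact_mod_cast h
  rcases lt_or_gt_of_ne hne with h | h
  · have h1 : (k:ℚ) ≤ (i:ℚ) - 1 := by have := hc k (i-1) (by omega); push_cast at this; linarith
    rw [min_eq_left h1, min_eq_left (by linarith), min_eq_left (by linarith)]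
    ring
  · have h1 : (i:ℚ) + 1 ≤ (k:ℚ) := by have := hc (i+1) k (by omega); push_cast at this; linarith
    rw [min_eq_right (by linarith), min_eq_right (by linarith), min_eq_right (by linarith)]
    ring

lemma Q_sd_le (τ : Multiset ℚ) (hint : ∀ t ∈ τ, ∃ k : ℤ, 0 < k ∧ t = (k:ℚ))
    (i : ℤ) (hi : 1 ≤ i) :
    Q ((i:ℚ)-1) τ + Q ((i:ℚ)+1) τ ≤ 2 * Q (i:ℚ) τ := by
  induction τ using Multiset.induction with
  | empty => simp [Q]
  | cons t s ih =>
    have hs := ih (fun x hx => hint x (Multiset.mem_cons_of_mem hx))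
    obtain ⟨k, hk0, rfl⟩ := hint t (Multiset.mem_cons_self t s)
    simp only [Q, Multiset.map_cons, Multiset.sum_cons] at *
    have := min_sd_le (k := k) hi
    linarith

lemma Q_sd_eq (τ : Multiset ℚ) (hint : ∀ t ∈ τ, ∃ k : ℤ, 0 < k ∧ t = (k:ℚ))
    (i : ℤ) (hi : 1 ≤ i) (hni : (i:ℚ) ∉ τ) :
    Q ((i:ℚ)-1) τ + Q ((i:ℚ)+1) τ = 2 * Q (i:ℚ) τ := by
  induction τ using Multiset.induction with
  | empty => simp [Q]
  | cons t s ih =>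
    have hs := ih (fun x hx => hint x (Multiset.mem_cons_of_mem hx))
      (fun hx => hni (Multiset.mem_cons_of_mem hx))
    obtain ⟨k, hk0, rfl⟩ := hint t (Multiset.mem_cons_self t s)
    have hne : k ≠ i := by
      intro h; subst h; exact hni (Multiset.mem_cons_self _ _)
    simp only [Q, Multiset.map_cons, Multiset.sum_cons] at *
    have := min_sd_eq (k := k) hi hne
    linarith

theorem vacancy_nonneg_iff_D2 (n L : ℕ) (hn : 2 ≤ n) (lam : ℕ → ℤ) (ν : ℕ → Multiset ℚ)
    (hν0 : ν 0 = 0)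
    (hparts : ∀ a, 1 ≤ a → a ≤ n → ∀ t ∈ ν a, ∃ k : ℤ, 0 < k ∧ t = (k : ℚ))
    (hsize : ∀ a, 1 ≤ a → a ≤ n →
      (ν a).sum = (L : ℚ) - ∑ b ∈ Finset.Icc 1 a, (lam b : ℚ))
    (hdom : ∀ a, 1 ≤ a → a ≤ n - 1 → lam (a + 1) ≤ lam a)
    (hdom' : 0 ≤ lam n)
    :
    (∀ a, 1 ≤ a → a ≤ n → ∀ i : ℤ, 1 ≤ i → 0 ≤ P n L ν a (i : ℚ)) ↔
    (∀ a, 1 ≤ a → a ≤ n → ∀ i : ℤ, 1 ≤ i →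
      0 < (ν a).count (i : ℚ) → 0 ≤ P n L ν a (i : ℚ)) := by
  classical
  constructor
  · intro H a ha1 han i hi _; exact H a ha1 han i hi
  intro H2 a ha1 han i hi
  by_contra hneg
  push_neg at hneg
  -- basic facts about parts
  have hintall : ∀ b, b ≤ n → ∀ t ∈ ν b, ∃ k : ℤ, 0 < k ∧ t = (k:ℚ) := by
    intro b hb t ht
    rcases Nat.eq_zero_or_pos b with rfl | hb1
    · rw [hν0] at ht; simp at ht
    · exact hparts b hb1 hb t ht
  have hposall : ∀ b, b ≤ n → ∀ t ∈ ν b, 0 ≤ t := by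
    intro b hb t ht
    obtain ⟨k, hk, rfl⟩ := hintall b hb t ht
    exact_mod_cast hk.le
  set f : ℤ → ℚ := fun j => P n L ν a ((j:ℚ)) with hf
  -- (A) value at 0
  have hP0 : f 0 = 0 := by
    show P n L ν a ((0:ℤ):ℚ) = 0
    rw [show ((0:ℤ):ℚ) = 0 from rfl]
    unfold P
    split
    · rw [Q_zero _ (hposall (n-1) (by omega)), Q_zero _ (hposall n le_rfl)]; push_cast; ring
    · next h =>
      rw [Q_zero _ (hposall (a-1) (by omega)), Q_zero _ (hposall a han),
          Q_zero _ (hposall (a+1) (by omega))]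
      have : min (0:ℚ) 1 = 0 := by norm_num
      rw [this]; ring
  -- (B) concavity where no part equals j
  have hconc : ∀ j : ℤ, 1 ≤ j → ((j:ℚ) ∉ ν a) → f (j-1) + f (j+1) ≤ 2 * f j := by
    intro j hj hnotin
    show P n L ν a ((j-1:ℤ):ℚ) + P n L ν a ((j+1:ℤ):ℚ) ≤ 2 * P n L ν a ((j:ℤ):ℚ)
    have e1 : ((j-1:ℤ):ℚ) = (j:ℚ) - 1 := by push_cast; ring
    have e2 : ((j+1:ℤ):ℚ) = (j:ℚ) + 1 := by push_cast; ring
    rw [e1, e2]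
    unfold P
    split
    · next h =>
      subst h
      have h1 := Q_sd_le (ν (a-1)) (hintall (a-1) (by omega)) j hj
      have h2 := Q_sd_eq (ν a) (hintall a le_rfl) j hj hnotin
      linarith
    · next h =>
      have h1 := Q_sd_le (ν (a-1)) (hintall (a-1) (by omega)) j hj
      have h2 := Q_sd_eq (ν a) (hintall a han) j hj hnotin
      have h3 := Q_sd_le (ν (a+1)) (hintall (a+1) (by omega)) j hj
      have hj1 : (1:ℚ) ≤ (j:ℚ) := by exact_mod_cast hj
      have m2 : min ((j:ℚ)+1) 1 = 1 := min_eq_right (by linarith)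
      have m3 : min ((j:ℚ)) 1 = 1 := min_eq_right hj1
      have m1 : min ((j:ℚ)-1) 1 ≤ 1 := min_le_right _ _
      have m1' : 0 ≤ min ((j:ℚ)-1) 1 := le_min (by linarith) (by norm_num)
      have hLc : (0:ℚ) ≤ (L:ℚ) * (if a = 1 then (1:ℚ) else 0) := by
        positivity
      rw [m2, m3]
      set c := (if a = 1 then (1:ℚ) else 0)
      nlinarith [hLc, m1]
  -- (C) nonnegativity for large j
  set Bq : ℚ := 1 + ∑ b ∈ Finset.Icc 1 n, (ν b).sum with hBq
  have hsumnn : ∀ b, b ≤ n → (0:ℚ) ≤ (ν b).sum :=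
    fun b hb => Multiset.sum_nonneg (hposall b hb)
  have hBq1 : (1:ℚ) ≤ Bq := by
    have : (0:ℚ) ≤ ∑ b ∈ Finset.Icc 1 n, (ν b).sum :=
      Finset.sum_nonneg (fun b hb => hsumnn b (Finset.mem_Icc.1 hb).2)
    simp only [hBq]; linarith
  have hbound : ∀ b, b ≤ n → ∀ t ∈ ν b, t ≤ Bq := by
    intro b hb t ht
    rcases Nat.eq_zero_or_pos b with rfl | hb1
    · rw [hν0] at ht; simp at ht
    · have h1 : t ≤ (ν b).sum := Multiset.single_le_sum (hposall b hb) t ht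
      have h2 : (ν b).sum ≤ ∑ b ∈ Finset.Icc 1 n, (ν b).sum :=
        Finset.single_le_sum (f := fun b => (ν b).sum)
          (fun c hc => hsumnn c (Finset.mem_Icc.1 hc).2) (Finset.mem_Icc.2 ⟨hb1, hb⟩)
      simp only [hBq]; linarith
  have hlarge : ∀ j : ℤ, Bq ≤ (j:ℚ) → 0 ≤ f j := by
    intro j hj
    have hQ : ∀ b, b ≤ n → Q ((j:ℤ):ℚ) (ν b) = (ν b).sum := by
      intro b hb
      exact Q_large _ _ (fun t ht => le_trans (hbound b hb t ht) hj)
    show 0 ≤ P n L ν a ((j:ℤ):ℚ)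
    unfold P
    split
    · -- a = n
      rw [hQ (n-1) (by omega), hQ n le_rfl,
          hsize (n-1) (by omega) (by omega), hsize n (by omega) le_rfl]
      obtain ⟨m, rfl⟩ : ∃ m, n = m + 1 := ⟨n - 1, by omega⟩
      rw [Finset.sum_Icc_succ_top (by omega)]
      simp only [Nat.add_sub_cancel]
      have := hdom'
      have h' : (0:ℚ) ≤ (lam (m+1) : ℚ) := by exact_mod_cast this
      linarith
    · next h =>
      have hm : min ((j:ℤ):ℚ) 1 = 1 := min_eq_right (le_trans hBq1 hj)
      rw [hm]
      rcases Nat.eq_or_lt_of_le ha1 with h1 | h1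
      · -- a = 1
        rw [← h1]
        simp only [if_pos rfl]
        rw [hν0]
        rw [hQ 1 (by omega), hQ 2 hn, hsize 1 (by omega) (by omega), hsize 2 (by omega) hn]
        have e1 : ∑ b ∈ Finset.Icc 1 1, (lam b : ℚ) = (lam 1 : ℚ) := by
          rw [Finset.Icc_self, Finset.sum_singleton]
        have e2 : ∑ b ∈ Finset.Icc 1 2, (lam b : ℚ) = (lam 1 : ℚ) + (lam 2 : ℚ) := by
          rw [show (2:ℕ) = 1 + 1 from rfl, Finset.sum_Icc_succ_top (by omega), e1]
        rw [e1, e2]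
        have hd : lam 2 ≤ lam 1 := hdom 1 le_rfl (by omega)
        have hd' : (lam 2 : ℚ) ≤ (lam 1 : ℚ) := by exact_mod_cast hd
        have hQ0 : Q ((j:ℤ):ℚ) 0 = 0 := by simp [Q]
        rw [hQ0]
        simp
        linarith
      · -- 2 ≤ a < n
        have han' : a < n := lt_of_le_of_ne han h
        obtain ⟨m, rfl⟩ : ∃ m, a = m + 1 := ⟨a - 1, by omega⟩
        have h1m : 1 ≤ m := by omega
        simp only [Nat.add_sub_cancel, if_neg (by omega : ¬ m + 1 = 1)]
        rw [hQ m (by omega), hQ (m+1) (by omega), hQ (m+2) (by omega),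
            hsize m h1m (by omega), hsize (m+1) (by omega) (by omega),
            hsize (m+2) (by omega) (by omega)]
        rw [Finset.sum_Icc_succ_top (show 1 ≤ m + 1 by omega),
            Finset.sum_Icc_succ_top (show 1 ≤ m + 2 by omega),
            Finset.sum_Icc_succ_top (show 1 ≤ m + 1 by omega)]
        have hd : lam (m+2) ≤ lam (m+1) := hdom (m+1) (by omega) (by omega)
        have hd' : (lam (m+2) : ℚ) ≤ (lam (m+1) : ℚ) := by exact_mod_cast hd
        push_cast
        linarith
  -- (D) minimal negative index
  have hex : ∃ k : ℕ, f (1 + k) < 0 := by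
    refine ⟨(i - 1).toNat, ?_⟩
    have : (1 + ((i-1).toNat : ℤ)) = i := by
      rw [Int.toNat_of_nonneg (by omega)]; ring
    rw [this]
    exact hneg
  let k0 := Nat.find hex
  set i0 : ℤ := 1 + (k0 : ℤ) with hi0
  have hfi0 : f i0 < 0 := Nat.find_spec hex
  have hi01 : 1 ≤ i0 := by omega
  have hprev : 0 ≤ f (i0 - 1) := by
    rcases Nat.eq_zero_or_pos k0 with hk | hk
    · have : i0 - 1 = 0 := by omega
      rw [this, hP0]
    · have hmin := Nat.find_min hex (m := k0 - 1) (by omega)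
      push_neg at hmin
      have : (1 + ((k0 - 1 : ℕ) : ℤ)) = i0 - 1 := by
        have : ((k0 - 1 : ℕ) : ℤ) = (k0 : ℤ) - 1 := by omega
        omega
      rwa [this] at hmin
  -- (E) descent
  have hdesc : ∀ k : ℕ, f (i0 + k) < 0 ∧ f (i0 + k) ≤ f (i0 + k - 1) := by
    intro k
    induction k with
    | zero =>
      constructor
      · simpa using hfi0
      · have : i0 + (0:ℕ) = i0 := by simp
        rw [this]; linarith
    | succ k ih =>
      obtain ⟨h1, h2⟩ := ih
      set j : ℤ := i0 + k with hjd
      have hj1 : 1 ≤ j := by omega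
      have hnotin : (j:ℚ) ∉ ν a := by
        intro hmem
        have hcount : 0 < (ν a).count ((j:ℤ):ℚ) := Multiset.count_pos.2 hmem
        have := H2 a ha1 han j hj1 hcount
        exact absurd h1 (by rw [hf] at h1 ⊢; exact not_lt.2 this)
      have hc := hconc j hj1 hnotin
      have e : i0 + ((k+1 : ℕ) : ℤ) = j + 1 := by push_cast; omega
      rw [e]
      have e2 : j + 1 - 1 = j := by ring
      rw [e2]
      constructor
      · linarith
      · linarith
  -- (F) contradiction
  set k : ℕ := (⌈Bq⌉ - i0).toNat with hk
  have h1 := (hdesc k).1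
  have hge : Bq ≤ ((i0 + (k:ℤ) : ℤ) : ℚ) := by
    have hceil : (⌈Bq⌉ - i0 : ℤ) ≤ (k : ℤ) := Int.self_le_toNat _
    have : ⌈Bq⌉ ≤ i0 + (k:ℤ) := by omega
    calc Bq ≤ (⌈Bq⌉ : ℚ) := Int.le_ceil _
      _ ≤ ((i0 + (k:ℤ) : ℤ) : ℚ) := by exact_mod_cast this
  have := hlarge (i0 + (k:ℤ)) hge
  linarith
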